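/- arXiv:2010.15080 — 2 statements merged into one kernel-verified Lean document; each statement's English description precedes it below -/
import Mathlib

section
/- For every integer n ≥ 1 and every real number x ≠ 0, the Golden derivative of the n-th Bernoulli–Fibonacci polynomial satisfies (B_n^F(φx) − B_n^F(−x/φ)) / ((φ + 1/φ)·x) = F_n · B_{n−1}^F(x), where φ = (1+√5)/2 is the golden ratio and F_n is the n-th Fibonacci number. -/
/-!
Write `G_t(z) = ∑ B_k(t) z^k / F_k!` and `E_t(z) = ∑ t^k z^k / F_k!`, so that the defining
identity reads `G_t · (E_1 - 1) = z · E_t` with a factor `E_1 - 1` independent of `t`.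
By Binet, `φ^k - ψ^k = √5 F_k`, and `F_k! = F_{k-1}! F_k` gives
`E_{φx} - E_{ψx} = √5 x · z · E_x`. Multiplying by `E_1 - 1` and cancelling it (it is a
nonzero power series) transfers this to `G_{φx} - G_{ψx} = √5 x · z · G_x`, whose
coefficient of `z^n` is the claim.
-/

def fibFact (n : ℕ) : ℕ := ∏ i ∈ Finset.range n, Nat.fib (i + 1)

noncomputable def phi : ℝ := (1 + Real.sqrt 5) / 2

open PowerSeries Real
open scoped goldenRatio

lemma fibFact_succ (n : ℕ) : fibFact (n + 1) = fibFact n * Nat.fib (n + 1) :=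
  Finset.prod_range_succ _ _

lemma fibFact_pos (n : ℕ) : 0 < fibFact n :=
  Finset.prod_pos fun i _ => Nat.fib_pos.mpr i.succ_pos

section FibEGF

variable {K : Type*} [Field K]

noncomputable def fibEGF (a : ℕ → K) : K⟦X⟧ :=
  mk fun k => (fibFact k : K)⁻¹ * a k

@[simp]
lemma coeff_fibEGF (a : ℕ → K) (k : ℕ) : coeff k (fibEGF a) = (fibFact k : K)⁻¹ * a k :=
  coeff_mk _ _

@[simp]
lemma constantCoeff_fibEGF (a : ℕ → K) : constantCoeff (fibEGF a) = a 0 := by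
  simp [← coeff_zero_eq_constantCoeff_apply, fibFact]

lemma fibEGF_sub (a b : ℕ → K) : fibEGF a - fibEGF b = fibEGF (a - b) := by
  ext k; simp [mul_sub]

lemma fibEGF_eq_smul_X_mul_iff [CharZero K] {a c : ℕ → K} {r : K} :
    fibEGF a = r • (X * fibEGF c) ↔
      a 0 = 0 ∧ ∀ m, a (m + 1) = r * Nat.fib (m + 1) * c m := by
  rw [PowerSeries.ext_iff, ← Nat.and_forall_add_one]
  refine and_congr (by simp [fibFact]) (forall_congr' fun m => ?_)
  have hfact : (fibFact m : K) ≠ 0 := Nat.cast_ne_zero.mpr (fibFact_pos m).ne'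
  have hfib : (Nat.fib (m + 1) : K) ≠ 0 := Nat.cast_ne_zero.mpr (Nat.fib_pos.mpr m.succ_pos).ne'
  simp only [coeff_fibEGF, coeff_smul, coeff_succ_X_mul, fibFact_succ, Nat.cast_mul, smul_eq_mul]
  field_simp

lemma fibEGF_sub_eq_of_mul_eq {f : K → ℕ → K}
    (hf : ∀ t, fibEGF (f t) * (fibEGF 1 - 1) = X * fibEGF (t ^ ·)) {s t u r : K}
    (h : fibEGF (s ^ ·) - fibEGF (t ^ ·) = r • (X * fibEGF (u ^ ·))) :
    fibEGF (f s) - fibEGF (f t) = r • (X * fibEGF (f u)) := by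
  have hS : (fibEGF 1 - 1 : K⟦X⟧) ≠ 0 := fun h0 => by
    simpa [fibFact] using congrArg (coeff 1) h0
  refine mul_right_cancel₀ hS ?_
  rw [sub_mul, hf, hf, ← mul_sub, h, smul_mul_assoc, mul_assoc, hf, mul_smul_comm]

lemma fibEGF_aeval_mul_eq [CharZero K] {B : ℕ → Polynomial ℚ}
    (hB : (PowerSeries.mk fun n => Polynomial.C ((fibFact n : ℚ)⁻¹) * B n) *
          (PowerSeries.mk fun n =>
            if n = 0 then 0 else Polynomial.C ((fibFact n : ℚ)⁻¹)) =
          PowerSeries.X *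
          PowerSeries.mk (fun n => Polynomial.C ((fibFact n : ℚ)⁻¹) * Polynomial.X ^ n))
    (t : K) :
    fibEGF (fun k => Polynomial.aeval t (B k)) * (fibEGF 1 - 1) = X * fibEGF (t ^ ·) := by
  have h := congrArg (map (Polynomial.aeval t).toRingHom) hB
  rw [map_mul, map_mul, map_X] at h
  convert h using 2 <;> ext k <;> by_cases hk : k = 0 <;> simp [hk, fibFact]

end FibEGF

lemma fibEGF_goldenRatio_mul_pow_sub (x : ℝ) :
    fibEGF ((φ * x) ^ ·) - fibEGF ((ψ * x) ^ ·) = (√5 * x) • (X * fibEGF (x ^ ·)) := by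
  rw [fibEGF_sub, fibEGF_eq_smul_X_mul_iff]
  refine ⟨by simp, fun m => ?_⟩
  rw [Pi.sub_apply, mul_pow, mul_pow, ← sub_mul, coe_fib_eq]
  field_simp
  ring

theorem bernoulliFib_golden_derivative_general
    (B : ℕ → Polynomial ℚ)
    (hB : (PowerSeries.mk fun n => Polynomial.C ((fibFact n : ℚ)⁻¹) * B n) *
          (PowerSeries.mk fun n =>
            if n = 0 then 0 else Polynomial.C ((fibFact n : ℚ)⁻¹)) =
          PowerSeries.X *
          PowerSeries.mk (fun n => Polynomial.C ((fibFact n : ℚ)⁻¹) * Polynomial.X ^ n))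
    (n : ℕ) (x : ℝ) (hx : x ≠ 0) :
    (Polynomial.aeval (phi * x) (B n) - Polynomial.aeval (-(x / phi)) (B n)) /
        ((phi + 1 / phi) * x) =
      (Nat.fib n : ℝ) * Polynomial.aeval x (B (n - 1)) := by
  have hphi : phi = φ := rfl
  have hconj : -(x / phi) = ψ * x := by
    rw [hphi, div_eq_mul_inv, inv_goldenRatio]; ring
  have hsum : phi + 1 / phi = √5 := by
    rw [hphi, one_div, inv_goldenRatio, ← goldenRatio_sub_goldenConj]; ring
  obtain ⟨hzero, hsucc⟩ := fibEGF_eq_smul_X_mul_iff.mp <| (fibEGF_sub _ _).symm.trans <|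
    fibEGF_sub_eq_of_mul_eq (fibEGF_aeval_mul_eq hB) (fibEGF_goldenRatio_mul_pow_sub x)
  rw [hconj, hsum, div_eq_iff (by positivity), hphi]
  cases n with
  | zero => simpa [sub_eq_zero] using hzero
  | succ m =>
    simp only [Pi.sub_apply] at hsucc
    rw [hsucc m, Nat.add_sub_cancel]
    ring

/-- For every `n ≥ 1` and real `x ≠ 0`, the Golden derivative of the `n`-th
Bernoulli–Fibonacci polynomial equals `F_n` times the `(n-1)`-st one.
Here `B` is the (unique) sequence of Bernoulli–Fibonacci polynomials, characterized by the
generating-function identity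
`(∑ B_n(x) z^n/F_n!) * (∑_{n≥1} z^n/F_n!) = z * ∑ x^n z^n/F_n!` in `(ℚ[x])⟦z⟧`. -/
theorem bernoulliFib_golden_derivative
    (B : ℕ → Polynomial ℚ)
    (hB : (PowerSeries.mk fun n => Polynomial.C ((fibFact n : ℚ)⁻¹) * B n) *
          (PowerSeries.mk fun n =>
            if n = 0 then 0 else Polynomial.C ((fibFact n : ℚ)⁻¹)) =
          PowerSeries.X *
          PowerSeries.mk (fun n => Polynomial.C ((fibFact n : ℚ)⁻¹) * Polynomial.X ^ n))
    (n : ℕ) (hn : 1 ≤ n) (x : ℝ) (hx : x ≠ 0) :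
    (Polynomial.aeval (phi * x) (B n) - Polynomial.aeval (-(x / phi)) (B n)) /
        ((phi + 1 / phi) * x) =
      (Nat.fib n : ℝ) * Polynomial.aeval x (B (n - 1)) :=
  bernoulliFib_golden_derivative_general B hB n x hx
end

section
/- For every integer n ≥ 2, evaluating the n-th Bernoulli–Fibonacci polynomial at 1 gives the n-th Bernoulli–Fibonacci number: B_n^F(1) = b_n^F. -/
open PowerSeries

theorem fibFact_ne_zero (n : ℕ) : fibFact n ≠ 0 :=
  Finset.prod_ne_zero_iff.mpr fun i _ => (Nat.fib_pos.mpr i.succ_pos).ne'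

section

variable {K : Type*} [Field K]

noncomputable def fibExp (a : K) : K⟦X⟧ := mk fun n => (fibFact n : K)⁻¹ * a ^ n

theorem fibExp_zero : fibExp (0 : K) = 1 := by
  ext n
  rcases n with _ | n <;> simp [fibExp, fibFact, coeff_one]

theorem fibExp_one_sub_one_ne_zero : fibExp (1 : K) - 1 ≠ 0 := by
  intro h
  simpa [fibExp, fibFact] using congrArg (coeff 1) h

theorem map_eval_mk_fibFact_mul_X_pow (a : K) :
    map (Polynomial.evalRingHom a)
      (mk fun n => Polynomial.C (fibFact n : K)⁻¹ * Polynomial.X ^ n) = fibExp a := by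
  ext n
  simp [fibExp]

theorem map_eval_mk_fibFact_ite (a : K) :
    map (Polynomial.evalRingHom a)
      (mk fun n => if n = 0 then 0 else Polynomial.C (fibFact n : K)⁻¹) = fibExp 1 - 1 := by
  ext n
  rcases n with _ | n <;> simp [fibExp, fibFact, coeff_one]

theorem mk_eval_one_sub_eval_zero_eq_X (B : ℕ → Polynomial K)
    (hB : (mk fun n => Polynomial.C (fibFact n : K)⁻¹ * B n) *
          (mk fun n => if n = 0 then 0 else Polynomial.C (fibFact n : K)⁻¹) =
          X * mk (fun n => Polynomial.C (fibFact n : K)⁻¹ * Polynomial.X ^ n)) :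
    mk (fun n => (fibFact n : K)⁻¹ * ((B n).eval 1 - (B n).eval 0)) = X := by
  set P : K → K⟦X⟧ := fun a => mk fun n => (fibFact n : K)⁻¹ * (B n).eval a
  have hP : ∀ a, P a * (fibExp 1 - 1) = X * fibExp a := fun a => by
    have h := congrArg (map (Polynomial.evalRingHom a)) hB
    rw [map_mul, map_mul, map_X, map_eval_mk_fibFact_mul_X_pow, map_eval_mk_fibFact_ite] at h
    convert h using 2
    ext n
    simp [P]
  have h1 := hP 1
  have h0 := hP 0
  rw [fibExp_zero] at h0
  have : P 1 - P 0 = X :=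
    mul_right_cancel₀ fibExp_one_sub_one_ne_zero (by linear_combination h1 - h0)
  rw [← this]
  ext n
  simp [P, mul_sub]

end

/-- For every `n ≥ 2`, `B_n^F(1) = b_n^F = B_n^F(0)`. Here `B` is the (unique) sequence of
Bernoulli–Fibonacci polynomials, characterized by the generating-function identity
`(∑ B_n(x) z^n/F_n!) * (∑_{n≥1} z^n/F_n!) = z * ∑ x^n z^n/F_n!` in `(ℚ[x])⟦z⟧`. -/
theorem bernoulliFib_eval_one
    (B : ℕ → Polynomial ℚ)
    (hB : (PowerSeries.mk fun n => Polynomial.C ((fibFact n : ℚ)⁻¹) * B n) *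
          (PowerSeries.mk fun n =>
            if n = 0 then 0 else Polynomial.C ((fibFact n : ℚ)⁻¹)) =
          PowerSeries.X *
          PowerSeries.mk (fun n => Polynomial.C ((fibFact n : ℚ)⁻¹) * Polynomial.X ^ n))
    (n : ℕ) (hn : 2 ≤ n) :
    (B n).eval 1 = (B n).eval 0 := by
  have h := congrArg (coeff n) (mk_eval_one_sub_eval_zero_eq_X B hB)
  rw [coeff_mk, coeff_X, if_neg (by omega), mul_eq_zero, _root_.inv_eq_zero, Nat.cast_eq_zero,
    sub_eq_zero] at h
  exact h.resolve_left (fibFact_ne_zero n)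
end
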